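/- If R₁ is an intuitionistic fuzzy soft relation from (F,A) to (G,B) and R₂ is an intuitionistic fuzzy soft relation from (G,B) to (H,C), and the t-norm and t-conorm are idempotent (a∗a = a and a⋄a = a), then R₁ ∘ R₂ is an intuitionistic fuzzy soft relation from (F,A) to (H,C), i.e. (R₁ ∘ R₂)(a,c) ⊆ F(a) ∩ H(c). -/
import Mathlib


open unitInterval

/-- An intuitionistic fuzzy set on `U`: membership and non-membership degrees in `[0,1]`. -/
structure IFS (U : Type*) where
  mu : U → I
  nu : U → I

/-- Pointwise intersection of intuitionistic fuzzy sets via a t-norm `star` on membership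
and a t-conorm `dia` on non-membership. -/
def IFS.inter {U : Type*} (star dia : I → I → I) (P Q : IFS U) : IFS U :=
  ⟨fun x => star (P.mu x) (Q.mu x), fun x => dia (P.nu x) (Q.nu x)⟩

/-- Inclusion of intuitionistic fuzzy sets: pointwise `μ ≤ μ` and `ν ≥ ν`. -/
def IFS.subset {U : Type*} (P Q : IFS U) : Prop :=
  ∀ x, P.mu x ≤ Q.mu x ∧ Q.nu x ≤ P.nu x

/-- Inverse of an intuitionistic fuzzy soft relation. -/
def IFSRel.inv {U E : Type*} (R : E → E → IFS U) : E → E → IFS U :=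
  fun a b => R b a

/-- Composition of intuitionistic fuzzy soft relations through the intermediate parameter `b`:
`(R₁ ∘ R₂)(a,c) = R₁(a,b) ∩ R₂(b,c)`. -/
def IFSRel.comp {U E : Type*} (star dia : I → I → I)
    (R₁ R₂ : E → E → IFS U) (b : E) : E → E → IFS U :=
  fun a c => IFS.inter star dia (R₁ a b) (R₂ b c)

/-- If `R₁` is an intuitionistic fuzzy soft relation from `(F,A)` to `(G,B)` and `R₂`
is one from `(G,B)` to `(H,C)`, where the t-norm and t-conorm are idempotent, then
`R₁ ∘ R₂` is an intuitionistic fuzzy soft relation from `(F,A)` to `(H,C)`. -/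
theorem comp_is_relation {U E : Type*} (star dia : I → I → I)
    (hstar_comm : ∀ a b, star a b = star b a)
    (hstar_assoc : ∀ a b c, star (star a b) c = star a (star b c))
    (hstar_one : ∀ a, star a 1 = a)
    (hstar_mono : ∀ a b c d, a ≤ c → b ≤ d → star a b ≤ star c d)
    (hdia_comm : ∀ a b, dia a b = dia b a)
    (hdia_assoc : ∀ a b c, dia (dia a b) c = dia a (dia b c))
    (hdia_zero : ∀ a, dia a 0 = a)
    (hdia_mono : ∀ a b c d, a ≤ c → b ≤ d → dia a b ≤ dia c d)
    (hstar_idem : ∀ a, star a a = a) (hdia_idem : ∀ a, dia a a = a)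
    (A B C : Set E) (F G H : E → IFS U) (R₁ R₂ : E → E → IFS U)
    (hR₁ : ∀ a ∈ A, ∀ b ∈ B, IFS.subset (R₁ a b) (IFS.inter star dia (F a) (G b)))
    (hR₂ : ∀ b ∈ B, ∀ c ∈ C, IFS.subset (R₂ b c) (IFS.inter star dia (G b) (H c))) :
    ∀ a ∈ A, ∀ b ∈ B, ∀ c ∈ C,
      IFS.subset (IFSRel.comp star dia R₁ R₂ b a c)
        (IFS.inter star dia (F a) (H c)) := by
  intro a ha b hb c hc x
  have h1 := (hR₁ a ha b hb x)
  have h2 := (hR₂ b hb c hc x)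
  have sle : ∀ p q : I, star p q ≤ p := fun p q => by
    have := hstar_mono p q p 1 le_rfl le_one'
    simpa [hstar_one] using this
  have sler : ∀ p q : I, star p q ≤ q := fun p q => by
    rw [hstar_comm]; exact sle q p
  have dge : ∀ p q : I, p ≤ dia p q := fun p q => by
    have := hdia_mono p 0 p q le_rfl nonneg'
    simpa [hdia_zero] using this
  have dger : ∀ p q : I, q ≤ dia p q := fun p q => by
    rw [hdia_comm]; exact dge q p
  constructor
  · calc star ((R₁ a b).mu x) ((R₂ b c).mu x)
        ≤ star (star ((F a).mu x) ((G b).mu x)) (star ((G b).mu x) ((H c).mu x)) :=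
          hstar_mono _ _ _ _ h1.1 h2.1
      _ ≤ star ((F a).mu x) ((H c).mu x) := hstar_mono _ _ _ _ (sle _ _) (sler _ _)
  · calc dia ((F a).nu x) ((H c).nu x)
        ≤ dia (dia ((F a).nu x) ((G b).nu x)) (dia ((G b).nu x) ((H c).nu x)) :=
          hdia_mono _ _ _ _ (dge _ _) (dger _ _)
      _ ≤ dia ((R₁ a b).nu x) ((R₂ b c).nu x) := hdia_mono _ _ _ _ h1.2 h2.2
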